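/- arXiv:1008.2329 — 5 statements merged into one kernel-verified Lean document; each statement's English description precedes it below -/
import Mathlib

section
/- Let X ⊆ ℝ^n be a nonempty compact set and let φ : ℝ^n → [0, +∞) be a C² mapping that is proper (φ^{-1}([s,t]) is compact for all s < t) and satisfies φ(x) = 0 if and only if x ∈ X, and ∇φ(x) = 0 if and only if x ∈ X. Then X is a global attractor for the equation ẋ = −∇φ(x): every initial value problem has a unique solution defined for all t ≥ 0, every point of X is an equilibrium (so X is invariant), and for every bounded B ⊆ ℝ^n, dist(Φ_t(B), X) → 0 as t → ∞, where Φ_t is the induced semiflow. -/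
/-!
Along a solution of `ẋ = -∇φ(x)` one has `d/dt φ(x t) = -‖∇φ(x t)‖² ≤ 0`, so a trajectory stays
in the compact sublevel set `{φ ≤ φ(x 0)}`. There `-∇φ` agrees with a compactly supported `C¹`,
hence globally Lipschitz and bounded, vector field; this gives global existence and uniqueness.
For attraction, fix a level `c` and `ε > 0`. The points of `{φ ≤ c}` at distance `≥ ε` from `X`
form a compact set on which `φ ≥ m > 0`, and on the compact shell `{m ≤ φ ≤ c}` one has
`‖∇φ‖² ≥ δ > 0`. So every trajectory starting in `{φ ≤ c}` drops below level `m` by time `c / δ`,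
and from then on stays `ε`-close to `X`.
-/

open Metric Set Bornology

noncomputable section

def IsForwardSolution {n : ℕ} (v : EuclideanSpace ℝ (Fin n) → EuclideanSpace ℝ (Fin n))
    (x : ℝ → EuclideanSpace ℝ (Fin n)) : Prop :=
  ∀ t : ℝ, 0 ≤ t → HasDerivWithinAt x (v (x t)) (Set.Ici 0) t

open scoped NNReal RealInnerProductSpace Topology

section LipschitzODE

variable {E : Type*} [NormedAddCommGroup E] [NormedSpace ℝ E] {v : E → E} {K : ℝ≥0}

theorem eqOn_Ici_of_lipschitzWith (hv : LipschitzWith K v) {x y : ℝ → E}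
    (hx : ∀ t, 0 ≤ t → HasDerivWithinAt x (v (x t)) (Ici 0) t)
    (hy : ∀ t, 0 ≤ t → HasDerivWithinAt y (v (y t)) (Ici 0) t) (h0 : x 0 = y 0) :
    EqOn x y (Ici 0) := fun _ ht =>
  ODE_solution_unique (v := fun _ => v) (fun _ => hv)
    (fun s hs => (hx s hs.1).continuousWithinAt.mono Icc_subset_Ici_self)
    (fun s hs => (hx s hs.1).mono (Ici_subset_Ici.2 hs.1))
    (fun s hs => (hy s hs.1).continuousWithinAt.mono Icc_subset_Ici_self)
    (fun s hs => (hy s hs.1).mono (Ici_subset_Ici.2 hs.1)) h0 ⟨ht, le_rfl⟩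

variable [CompleteSpace E]

theorem exists_forall_mem_Icc_hasDerivWithinAt_of_lipschitzWith (hv : LipschitzWith K v)
    {C : ℝ} (hC : ∀ z, ‖v z‖ ≤ C) (x₀ : E) {T : ℝ} (hT : 0 ≤ T) :
    ∃ x : ℝ → E, x 0 = x₀ ∧ ∀ t ∈ Icc 0 T, HasDerivWithinAt x (v (x t)) (Icc 0 T) t := by
  have hC₀ : 0 ≤ C := (norm_nonneg _).trans (hC 0)
  have hpl : IsPicardLindelof (fun _ => v) (tmin := 0) (tmax := T) ⟨0, left_mem_Icc.2 hT⟩ x₀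
      ⟨C * T, by positivity⟩ 0 ⟨C, hC₀⟩ K :=
    .of_time_independent (fun z _ => hC z) hv.lipschitzOnWith (by simp [hT]; exact le_rfl)
  exact hpl.exists_eq_forall_mem_Icc_hasDerivWithinAt₀

theorem exists_forall_hasDerivWithinAt_Ici_of_lipschitzWith (hv : LipschitzWith K v)
    {C : ℝ} (hC : ∀ z, ‖v z‖ ≤ C) (x₀ : E) :
    ∃ x : ℝ → E, x 0 = x₀ ∧ ∀ t, 0 ≤ t → HasDerivWithinAt x (v (x t)) (Ici 0) t := by
  -- solutions on the intervals `[0, m]` agree on their common domains and glue together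
  choose sol hsol₀ hsol using fun m : ℕ =>
    exists_forall_mem_Icc_hasDerivWithinAt_of_lipschitzWith hv hC x₀ m.cast_nonneg
  have hsol' : ∀ m : ℕ, ∀ s ∈ Ico (0 : ℝ) m, HasDerivWithinAt (sol m) (v (sol m s)) (Ici 0) s :=
    fun m s hs => (hsol m s (Ico_subset_Icc_self hs)).mono_of_mem_nhdsWithin <| by
      simpa only [Ici_inter_Iic] using inter_mem_nhdsWithin (Ici 0) (Iic_mem_nhds hs.2)
  have hagree : ∀ m m' : ℕ, EqOn (sol m) (sol m') (Icc 0 (min (m : ℝ) m')) := by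
    intro m m'
    have hcont : ∀ {k : ℕ}, min (m : ℝ) m' ≤ k → ContinuousOn (sol k) (Icc 0 (min (m : ℝ) m')) :=
      fun hk s hs => (hsol _ s ⟨hs.1, hs.2.trans hk⟩).continuousWithinAt.mono
        (Icc_subset_Icc_right hk)
    have hderiv : ∀ {k : ℕ}, min (m : ℝ) m' ≤ k → ∀ s ∈ Ico 0 (min (m : ℝ) m'),
        HasDerivWithinAt (sol k) (v (sol k s)) (Ici s) s :=
      fun hk s hs => (hsol' _ s ⟨hs.1, hs.2.trans_le hk⟩).mono (Ici_subset_Ici.2 hs.1)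
    exact ODE_solution_unique (v := fun _ => v) (fun _ => hv) (hcont (min_le_left _ _))
      (hderiv (min_le_left _ _)) (hcont (min_le_right _ _)) (hderiv (min_le_right _ _))
      ((hsol₀ m).trans (hsol₀ m').symm)
  let k : ℝ → ℕ := fun t => ⌊t⌋₊ + 1
  have hk : ∀ t, t < k t := fun t => by exact_mod_cast Nat.lt_floor_add_one t
  refine ⟨fun t => sol (k t) t, by simpa [k] using hsol₀ 1, fun t ht => ?_⟩
  have heq : (fun s => sol (k s) s) =ᶠ[𝓝[Ici 0] t] sol (k t) := by
    filter_upwards [inter_mem_nhdsWithin (Ici 0) (Iio_mem_nhds (hk t))] with s hs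
    exact hagree _ _ ⟨hs.1, le_min (hk s).le hs.2.le⟩
  exact (hsol' (k t) t ⟨ht, hk t⟩).congr_of_eventuallyEq heq rfl

end LipschitzODE

section Sublevel

variable {α : Type*}

theorem isCompact_setOf_le_of_isCompact_preimage_Icc [TopologicalSpace α] {f : α → ℝ}
    (hf : ∀ x, 0 ≤ f x) (hproper : ∀ s t : ℝ, s < t → IsCompact (f ⁻¹' Icc s t)) (c : ℝ) :
    IsCompact {z | f z ≤ c} := by
  convert hproper (min c 0 - 1) c (by linarith [min_le_left c 0]) using 1
  ext z
  show f z ≤ c ↔ min c 0 - 1 ≤ f z ∧ f z ≤ c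
  refine ⟨fun h => ⟨?_, h⟩, And.right⟩
  linarith [hf z, min_le_right c 0]

theorem exists_pos_forall_infDist_le [PseudoMetricSpace α] {f : α → ℝ} {X : Set α}
    (hf : Continuous f) {c ε : ℝ} (hc : IsCompact {z | f z ≤ c}) (hpos : ∀ z ∉ X, 0 < f z)
    (hε : 0 < ε) : ∃ m > 0, ∀ z, f z ≤ c → f z < m → infDist z X ≤ ε := by
  have hS : IsCompact ({z | f z ≤ c} ∩ {z | ε ≤ infDist z X}) :=
    hc.inter_right (isClosed_le continuous_const (continuous_infDist_pt X))
  obtain ⟨m, hm, hmS⟩ := hS.exists_forall_le' hf.continuousOn fun z hz => hpos z fun hzX =>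
    hε.not_ge (infDist_zero_of_mem hzX ▸ hz.2)
  refine ⟨m, hm, fun z hzc hzm => ?_⟩
  by_contra! h
  exact (hmS z ⟨hzc, h.le⟩).not_gt hzm

end Sublevel

section Lyapunov

variable {E : Type*} [NormedAddCommGroup E] [InnerProductSpace ℝ E] [CompleteSpace E]
  {φ : E → ℝ}

theorem ContDiff.gradient_right {m n : WithTop ℕ∞} (hφ : ContDiff ℝ n φ) (hmn : m + 1 ≤ n) :
    ContDiff ℝ m (gradient φ) :=
  (InnerProductSpace.toDual ℝ E).symm.contDiff.comp (hφ.fderiv_right hmn)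

theorem HasGradientAt.comp_hasDerivWithinAt {g : E} {x : ℝ → E} {u : E} {s : Set ℝ} {t : ℝ}
    (hφ : HasGradientAt φ g (x t)) (hx : HasDerivWithinAt x u s t) :
    HasDerivWithinAt (φ ∘ x) ⟪g, u⟫ s t := by
  simpa using hφ.hasFDerivAt.comp_hasDerivWithinAt t hx

theorem add_mul_sub_le_of_inner_gradient_le (hφ : Differentiable ℝ φ) {x u : ℝ → E}
    {a b δ : ℝ} (hab : a ≤ b) (hx : ∀ t ∈ Icc a b, HasDerivWithinAt x (u t) (Icc a b) t)
    (hu : ∀ t ∈ Ioo a b, ⟪gradient φ (x t), u t⟫ ≤ -δ) :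
    φ (x b) + δ * (b - a) ≤ φ (x a) := by
  have hd : ∀ t ∈ Icc a b, HasDerivWithinAt (φ ∘ x) ⟪gradient φ (x t), u t⟫ (Icc a b) t :=
    fun t ht => (hφ (x t)).hasGradientAt.comp_hasDerivWithinAt (hx t ht)
  have hd' : ∀ t ∈ interior (Icc a b), HasDerivAt (φ ∘ x) ⟪gradient φ (x t), u t⟫ t := by
    rw [interior_Icc]
    exact fun t ht => (hd t (Ioo_subset_Icc_self ht)).hasDerivAt (Icc_mem_nhds ht.1 ht.2)
  have hmvt := (convex_Icc a b).image_sub_le_mul_sub_of_deriv_le (C := -δ)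
    (fun t ht => (hd t ht).continuousWithinAt)
    (fun t ht => (hd' t ht).differentiableAt.differentiableWithinAt)
    (fun t ht => (hd' t ht).deriv.trans_le (hu t (interior_Icc (a := a) ▸ ht)))
    a (left_mem_Icc.2 hab) b (right_mem_Icc.2 hab) hab
  simp only [Function.comp_apply] at hmvt
  linarith

theorem antitoneOn_comp_of_inner_gradient_nonpos (hφ : Differentiable ℝ φ) {x u : ℝ → E}
    (hx : ∀ t, 0 ≤ t → HasDerivWithinAt x (u t) (Ici 0) t)
    (hu : ∀ t, 0 ≤ t → ⟪gradient φ (x t), u t⟫ ≤ 0) :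
    AntitoneOn (φ ∘ x) (Ici 0) := by
  intro a ha b _ hab
  have := add_mul_sub_le_of_inner_gradient_le hφ (δ := 0) hab
    (fun t ht => (hx t (ha.trans ht.1)).mono (Icc_subset_Ici_iff hab |>.2 ha))
    (fun t ht => by simpa using hu t (ha.trans ht.1.le))
  simpa using this

def IsForwardGradientFlow (φ : E → ℝ) (x : ℝ → E) : Prop :=
  ∀ t, 0 ≤ t → HasDerivWithinAt x (-gradient φ (x t)) (Ici 0) t

theorem isForwardGradientFlow_const {z : E} (hz : gradient φ z = 0) :
    IsForwardGradientFlow φ fun _ => z := fun t _ => by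
  simpa [hz] using hasDerivWithinAt_const t (Ici 0) z

theorem IsForwardGradientFlow.antitoneOn_comp {x : ℝ → E} (hx : IsForwardGradientFlow φ x)
    (hφ : Differentiable ℝ φ) : AntitoneOn (φ ∘ x) (Ici 0) :=
  antitoneOn_comp_of_inner_gradient_nonpos hφ hx fun t _ => by
    simp only [inner_neg_right, neg_nonpos, real_inner_self_nonneg]

def gradientCutoff (φ : E → ℝ) (c : ℝ) (z : E) : E :=
  Real.smoothTransition (c + 1 - φ z) • -gradient φ z

theorem gradientCutoff_of_le {c : ℝ} {z : E} (h : φ z ≤ c) :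
    gradientCutoff φ c z = -gradient φ z := by
  rw [gradientCutoff, Real.smoothTransition.one_of_one_le (by linarith), one_smul]

theorem inner_gradient_gradientCutoff_nonpos (c : ℝ) (z : E) :
    ⟪gradient φ z, gradientCutoff φ c z⟫ ≤ 0 := by
  rw [gradientCutoff, inner_smul_right, inner_neg_right, real_inner_self_eq_norm_sq]
  exact mul_nonpos_of_nonneg_of_nonpos (Real.smoothTransition.nonneg _)
    (neg_nonpos.2 (sq_nonneg _))

theorem contDiff_gradientCutoff (hφ : ContDiff ℝ 2 φ) (c : ℝ) :
    ContDiff ℝ 1 (gradientCutoff φ c) :=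
  (Real.smoothTransition.contDiff.comp (contDiff_const.sub (hφ.of_le (by norm_num)))).smul
    (hφ.gradient_right le_rfl).neg

theorem hasCompactSupport_gradientCutoff (hφ : Continuous φ) {c : ℝ}
    (hc : IsCompact {z | φ z ≤ c + 1}) : HasCompactSupport (gradientCutoff φ c) := by
  refine hc.of_isClosed_subset (isClosed_tsupport _) (closure_minimal (fun z hz => ?_)
    (isClosed_le hφ continuous_const))
  show φ z ≤ c + 1
  by_contra! hlt
  exact hz (by rw [gradientCutoff, Real.smoothTransition.zero_of_nonpos (by linarith), zero_smul])

theorem exists_lipschitzWith_and_norm_le_gradientCutoff (hφ : ContDiff ℝ 2 φ) {c : ℝ}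
    (hc : IsCompact {z | φ z ≤ c + 1}) :
    (∃ K, LipschitzWith K (gradientCutoff φ c)) ∧ ∃ C, ∀ z, ‖gradientCutoff φ c z‖ ≤ C := by
  have hcs := hasCompactSupport_gradientCutoff hφ.continuous hc
  exact ⟨(contDiff_gradientCutoff hφ c).lipschitzWith_of_hasCompactSupport hcs one_ne_zero,
    hcs.exists_bound_of_continuous (contDiff_gradientCutoff hφ c).continuous⟩

theorem exists_isForwardGradientFlow (hφ : ContDiff ℝ 2 φ) (hsub : ∀ c, IsCompact {z | φ z ≤ c})
    (x₀ : E) : ∃ x : ℝ → E, x 0 = x₀ ∧ IsForwardGradientFlow φ x := by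
  obtain ⟨⟨K, hK⟩, C, hC⟩ := exists_lipschitzWith_and_norm_le_gradientCutoff hφ (hsub (φ x₀ + 1))
  obtain ⟨x, hx₀, hx⟩ := exists_forall_hasDerivWithinAt_Ici_of_lipschitzWith hK hC x₀
  -- the cutoff field does not increase `φ`, so `x` stays where the cutoff is inactive
  have hle : ∀ t, 0 ≤ t → φ (x t) ≤ φ x₀ := fun t ht => hx₀ ▸
    antitoneOn_comp_of_inner_gradient_nonpos (hφ.differentiable two_ne_zero) hx
      (fun t _ => inner_gradient_gradientCutoff_nonpos _ _) self_mem_Ici ht ht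
  exact ⟨x, hx₀, fun t ht => gradientCutoff_of_le (hle t ht) ▸ hx t ht⟩

theorem IsForwardGradientFlow.eqOn_Ici {x y : ℝ → E} (hx : IsForwardGradientFlow φ x)
    (hy : IsForwardGradientFlow φ y) (h0 : x 0 = y 0) (hφ : ContDiff ℝ 2 φ)
    (hsub : ∀ c, IsCompact {z | φ z ≤ c}) : EqOn x y (Ici 0) := by
  obtain ⟨⟨K, hK⟩, -⟩ := exists_lipschitzWith_and_norm_le_gradientCutoff hφ (hsub (φ (x 0) + 1))
  have hcut : ∀ z : ℝ → E, IsForwardGradientFlow φ z → z 0 = x 0 → ∀ t, 0 ≤ t →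
      HasDerivWithinAt z (gradientCutoff φ (φ (x 0)) (z t)) (Ici 0) t := by
    intro z hz hz₀ t ht
    have hle : φ (z t) ≤ φ (z 0) :=
      hz.antitoneOn_comp (hφ.differentiable two_ne_zero) self_mem_Ici ht ht
    rw [gradientCutoff_of_le (hz₀ ▸ hle)]
    exact hz t ht
  exact eqOn_Ici_of_lipschitzWith hK (hcut x hx rfl) (hcut y hy h0.symm) h0

theorem exists_pos_le_norm_gradient_sq (hφ : ContDiff ℝ 1 φ) {c m : ℝ}
    (hc : IsCompact {z | φ z ≤ c}) (hcrit : ∀ z, gradient φ z = 0 → φ z = 0) (hm : 0 < m) :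
    ∃ δ > 0, ∀ z, m ≤ φ z → φ z ≤ c → δ ≤ ‖gradient φ z‖ ^ 2 := by
  have hK : IsCompact ({z | φ z ≤ c} ∩ {z | m ≤ φ z}) :=
    hc.inter_right (isClosed_le continuous_const hφ.continuous)
  obtain ⟨δ, hδ, hδK⟩ := hK.exists_forall_le'
    ((hφ.gradient_right (zero_add _).le).continuous.norm.pow 2).continuousOn
    fun z hz => pow_pos (norm_pos_iff.2 fun h => hm.not_ge (hcrit z h ▸ hz.2)) 2
  exact ⟨δ, hδ, fun z hmz hzc => hδK z ⟨hzc, hmz⟩⟩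

theorem IsForwardGradientFlow.apply_lt_of_le_mul {x : ℝ → E} (hx : IsForwardGradientFlow φ x)
    (hφ : Differentiable ℝ φ) {c m δ t : ℝ} (hm : 0 < m)
    (hδ : ∀ z, m ≤ φ z → φ z ≤ c → δ ≤ ‖gradient φ z‖ ^ 2)
    (hx₀ : φ (x 0) ≤ c) (ht₀ : 0 ≤ t) (ht : c ≤ δ * t) : φ (x t) < m := by
  by_contra! hmt
  -- then `φ ∘ x` stays in `[m, c]` on `[0, t]`, so it drops by at least `δ * t ≥ c`
  have hanti := hx.antitoneOn_comp hφ
  have hdecay := add_mul_sub_le_of_inner_gradient_le hφ (δ := δ) ht₀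
    (fun s hs => (hx s hs.1).mono Icc_subset_Ici_self) fun s hs => by
      have hms : m ≤ φ (x s) := hmt.trans (hanti hs.1.le ht₀ hs.2.le)
      have hsc : φ (x s) ≤ c := (hanti self_mem_Ici hs.1.le hs.1.le).trans hx₀
      rw [inner_neg_right, real_inner_self_eq_norm_sq, neg_le_neg_iff]
      exact hδ _ hms hsc
  linarith

theorem exists_forall_infDist_le_of_isForwardGradientFlow (hφ : ContDiff ℝ 2 φ)
    (hsub : ∀ c, IsCompact {z | φ z ≤ c}) {X : Set E} (hpos : ∀ z ∉ X, 0 < φ z)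
    (hcrit : ∀ z, gradient φ z = 0 → φ z = 0) (c : ℝ) {ε : ℝ} (hε : 0 < ε) :
    ∃ T, ∀ x : ℝ → E, IsForwardGradientFlow φ x → φ (x 0) ≤ c →
      ∀ t, T ≤ t → infDist (x t) X ≤ ε := by
  obtain ⟨m, hm, hmX⟩ := exists_pos_forall_infDist_le hφ.continuous (hsub c) hpos hε
  obtain ⟨δ, hδ, hδm⟩ := exists_pos_le_norm_gradient_sq (hφ.of_le one_le_two) (hsub c) hcrit hm
  refine ⟨|c| / δ, fun x hx hx₀ t ht => ?_⟩
  have ht₀ : 0 ≤ t := (div_nonneg (abs_nonneg c) hδ.le).trans ht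
  have hct : c ≤ δ * t := (le_abs_self c).trans ((div_le_iff₀' hδ).1 ht)
  have hφd : Differentiable ℝ φ := hφ.differentiable two_ne_zero
  exact hmX _ ((hx.antitoneOn_comp hφd self_mem_Ici ht₀ ht₀).trans hx₀)
    (hx.apply_lt_of_le_mul hφd hm hδm hx₀ ht₀ hct)

end Lyapunov

theorem lyapunov_global_attractor_general
    (n : ℕ) (X : Set (EuclideanSpace ℝ (Fin n)))
    (φ : EuclideanSpace ℝ (Fin n) → ℝ)
    (hφ : ContDiff ℝ 2 φ) (hφnn : ∀ x, 0 ≤ φ x)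
    (hproper : ∀ s t : ℝ, s < t → IsCompact (φ ⁻¹' Set.Icc s t))
    (hzero : ∀ x, φ x = 0 ↔ x ∈ X)
    (hgrad : ∀ x, gradient φ x = 0 ↔ x ∈ X) :
    -- existence and uniqueness of forward solutions
    (∀ x₀, ∃ x : ℝ → EuclideanSpace ℝ (Fin n), x 0 = x₀ ∧
      IsForwardSolution (fun y => -gradient φ y) x) ∧
    (∀ x y : ℝ → EuclideanSpace ℝ (Fin n),
      IsForwardSolution (fun z => -gradient φ z) x →
      IsForwardSolution (fun z => -gradient φ z) y →
      x 0 = y 0 → ∀ t : ℝ, 0 ≤ t → x t = y t) ∧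
    ∃ Φ : ℝ → EuclideanSpace ℝ (Fin n) → EuclideanSpace ℝ (Fin n),
      (∀ y, Φ 0 y = y) ∧
      (∀ y, IsForwardSolution (fun z => -gradient φ z) (fun t => Φ t y)) ∧
      -- every point of `X` is an equilibrium, so `X` is invariant
      (∀ x ∈ X, ∀ t : ℝ, 0 ≤ t → Φ t x = x) ∧
      (∀ t : ℝ, 0 ≤ t → Φ t '' X = X) ∧
      -- every bounded set is attracted to `X`
      (∀ B : Set (EuclideanSpace ℝ (Fin n)), IsBounded B → ∀ ε : ℝ, 0 < ε →
        ∃ T : ℝ, ∀ t : ℝ, T ≤ t → ∀ y ∈ B, infDist (Φ t y) X ≤ ε) := by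
  have hsub := isCompact_setOf_le_of_isCompact_preimage_Icc hφnn hproper
  have huniq : ∀ x y, IsForwardSolution (fun z => -gradient φ z) x →
      IsForwardSolution (fun z => -gradient φ z) y → x 0 = y 0 → ∀ t, 0 ≤ t → x t = y t :=
    fun _ _ hx hy h0 _ ht => IsForwardGradientFlow.eqOn_Ici hx hy h0 hφ hsub ht
  choose Φ hΦ₀ hΦ using exists_isForwardGradientFlow hφ hsub
  have hfix : ∀ x ∈ X, ∀ t, 0 ≤ t → Φ x t = x := fun x hx t ht =>
    huniq _ _ (hΦ x) (isForwardGradientFlow_const ((hgrad x).2 hx)) (hΦ₀ x) t ht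
  refine ⟨fun x₀ => ⟨Φ x₀, hΦ₀ x₀, hΦ x₀⟩, huniq, fun t y => Φ y t, hΦ₀, hΦ, hfix,
    fun t ht => EqOn.image_eq_self fun x hx => hfix x hx t ht, fun B hB ε hε => ?_⟩
  obtain ⟨c, hc⟩ := (hB.isCompact_closure.bddAbove_image hφ.continuous.continuousOn).mono
    (image_mono subset_closure)
  obtain ⟨T, hT⟩ := exists_forall_infDist_le_of_isForwardGradientFlow hφ hsub
    (fun z hz => (hφnn z).lt_of_ne fun h => hz ((hzero z).1 h.symm))
    (fun z h => (hzero z).2 ((hgrad z).1 h)) c hε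
  exact ⟨T, fun t ht y hy => hT _ (hΦ y) ((hΦ₀ y).symm ▸ hc (mem_image_of_mem φ hy)) t ht⟩

/-- **Lyapunov's theorem.** If `φ : ℝ^n → [0,∞)` is `C²`, proper, vanishes exactly on the
nonempty compact set `X` and has `∇φ = 0` exactly on `X`, then `X` is a global attractor for
`ẋ = -∇φ(x)`: forward solutions exist and are unique, every point of `X` is an equilibrium
(so `X` is invariant), and every bounded set is attracted to `X`. -/
theorem lyapunov_global_attractor
    (n : ℕ) (X : Set (EuclideanSpace ℝ (Fin n))) (hXne : X.Nonempty) (hXcomp : IsCompact X)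
    (φ : EuclideanSpace ℝ (Fin n) → ℝ)
    (hφ : ContDiff ℝ 2 φ) (hφnn : ∀ x, 0 ≤ φ x)
    (hproper : ∀ s t : ℝ, s < t → IsCompact (φ ⁻¹' Set.Icc s t))
    (hzero : ∀ x, φ x = 0 ↔ x ∈ X)
    (hgrad : ∀ x, gradient φ x = 0 ↔ x ∈ X) :
    -- existence and uniqueness of forward solutions
    (∀ x₀, ∃ x : ℝ → EuclideanSpace ℝ (Fin n), x 0 = x₀ ∧
      IsForwardSolution (fun y => -gradient φ y) x) ∧
    (∀ x y : ℝ → EuclideanSpace ℝ (Fin n),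
      IsForwardSolution (fun z => -gradient φ z) x →
      IsForwardSolution (fun z => -gradient φ z) y →
      x 0 = y 0 → ∀ t : ℝ, 0 ≤ t → x t = y t) ∧
    ∃ Φ : ℝ → EuclideanSpace ℝ (Fin n) → EuclideanSpace ℝ (Fin n),
      (∀ y, Φ 0 y = y) ∧
      (∀ y, IsForwardSolution (fun z => -gradient φ z) (fun t => Φ t y)) ∧
      -- every point of `X` is an equilibrium, so `X` is invariant
      (∀ x ∈ X, ∀ t : ℝ, 0 ≤ t → Φ t x = x) ∧
      (∀ t : ℝ, 0 ≤ t → Φ t '' X = X) ∧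
      -- every bounded set is attracted to `X`
      (∀ B : Set (EuclideanSpace ℝ (Fin n)), IsBounded B → ∀ ε : ℝ, 0 < ε →
        ∃ T : ℝ, ∀ t : ℝ, T ≤ t → ∀ y ∈ B, infDist (Φ t y) X ≤ ε) :=
  lyapunov_global_attractor_general n X φ hφ hφnn hproper hzero hgrad
end
end

section
/- Let H be a real Hilbert space, 𝒜 ⊆ H compact, and L : H → ℝ^m a bounded linear map injective on 𝒜 for which there are constants C_L ≥ 1, γ > 0 and δ_L ∈ (0,1) such that |Lu − Lv| ≤ C_L‖u − v‖ for all u, v ∈ 𝒜, and |Lu − Lv| ≥ (1/C_L)·‖u − v‖/(−log‖u − v‖)^γ whenever u, v ∈ 𝒜 and 0 < ‖u − v‖ ≤ δ_L. Then: (a) for all u, v ∈ 𝒜 with 0 < ‖u − v‖ ≤ δ_L one has ‖u − v‖ ≤ C_L · |Lu − Lv| · (log(C_L/|Lu − Lv|))^γ; and (b) if in addition G : 𝒜 → H is Lipschitz with constant K, then for all u, v ∈ 𝒜 with 0 < ‖u − v‖ ≤ δ_L, |L(G(u)) − L(G(v))| ≤ C_L·K·‖L‖_op · |Lu − Lv|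 · (log(C_L/|Lu − Lv|))^γ, i.e. the embedded vector field g₁ := L∘G∘(L|_𝒜)^{-1} on L𝒜 is Lipschitz except for a logarithmic correction. -/
/-!
With `r = ‖u - v‖` and `ε = ‖L u - L v‖`, the lower bound reads `r ≤ C_L ε (-log r)^γ`,
while the upper bound `ε ≤ C_L r` gives `1 / r ≤ C_L / ε`, i.e. `-log r ≤ log (C_L / ε)`;
monotonicity of `t ↦ t ^ γ` yields (a). Part (b) composes (a) with the Lipschitz bounds
of `G` and of `L`.
-/

lemma Real.neg_log_le_log_div_of_le_mul {C r ε : ℝ} (hr : 0 < r) (hε : 0 < ε)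
    (h : ε ≤ C * r) : -Real.log r ≤ Real.log (C / ε) := by
  rw [← Real.log_inv]
  refine Real.log_le_log (inv_pos.2 hr) ((le_div_iff₀ hε).2 ((inv_mul_le_iff₀ hr).2 ?_))
  rwa [mul_comm r C]

lemma Real.le_mul_mul_log_div_rpow {C γ r ε : ℝ} (hC : 0 < C) (hγ : 0 ≤ γ)
    (hr0 : 0 < r) (hr1 : r < 1)
    (hlower : (1 / C) * (r / (-Real.log r) ^ γ) ≤ ε) (hupper : ε ≤ C * r) :
    r ≤ C * ε * Real.log (C / ε) ^ γ := by
  have hlog : 0 < -Real.log r := neg_pos.2 (Real.log_neg hr0 hr1)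
  have hε : 0 < ε := lt_of_lt_of_le (by positivity) hlower
  rw [one_div, inv_mul_le_iff₀ hC, div_le_iff₀ (Real.rpow_pos_of_pos hlog γ)] at hlower
  calc r ≤ C * ε * (-Real.log r) ^ γ := hlower
    _ ≤ C * ε * Real.log (C / ε) ^ γ := by
      gcongr
      exact Real.neg_log_le_log_div_of_le_mul hr0 hε hupper

theorem almost_biLipschitz_inverse_modulus_general
    {H : Type*} [NormedAddCommGroup H] [InnerProductSpace ℝ H]
    (m : ℕ) (𝒜 : Set H)
    (L : H →L[ℝ] EuclideanSpace ℝ (Fin m))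
    (CL γ δL : ℝ) (hCL : 1 ≤ CL) (hγ : 0 < γ) (hδ1 : δL < 1)
    (hupper : ∀ u ∈ 𝒜, ∀ v ∈ 𝒜, ‖L u - L v‖ ≤ CL * ‖u - v‖)
    (hlower : ∀ u ∈ 𝒜, ∀ v ∈ 𝒜, 0 < ‖u - v‖ → ‖u - v‖ ≤ δL →
      (1 / CL) * (‖u - v‖ / (-Real.log ‖u - v‖) ^ γ) ≤ ‖L u - L v‖) :
    -- (a) the inverse of `L|𝒜` is Lipschitz up to a logarithmic correction
    (∀ u ∈ 𝒜, ∀ v ∈ 𝒜, 0 < ‖u - v‖ → ‖u - v‖ ≤ δL →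
      ‖u - v‖ ≤ CL * ‖L u - L v‖ * (Real.log (CL / ‖L u - L v‖)) ^ γ) ∧
    -- (b) the embedded vector field is Lipschitz up to a logarithmic correction
    (∀ (G : H → H) (K : ℝ), (∀ u ∈ 𝒜, ∀ v ∈ 𝒜, ‖G u - G v‖ ≤ K * ‖u - v‖) →
      ∀ u ∈ 𝒜, ∀ v ∈ 𝒜, 0 < ‖u - v‖ → ‖u - v‖ ≤ δL →
        ‖L (G u) - L (G v)‖ ≤
          CL * K * ‖L‖ * (‖L u - L v‖ * (Real.log (CL / ‖L u - L v‖)) ^ γ)) := by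
  have inverse_modulus : ∀ u ∈ 𝒜, ∀ v ∈ 𝒜, 0 < ‖u - v‖ → ‖u - v‖ ≤ δL →
      ‖u - v‖ ≤ CL * ‖L u - L v‖ * (Real.log (CL / ‖L u - L v‖)) ^ γ :=
    fun u hu v hv hr hrδ => Real.le_mul_mul_log_div_rpow (by linarith) hγ.le hr
      (hrδ.trans_lt hδ1) (hlower u hu v hv hr hrδ) (hupper u hu v hv)
  refine ⟨inverse_modulus, fun G K hG u hu v hv hr hrδ => ?_⟩
  have hK : 0 ≤ K := nonneg_of_mul_nonneg_left ((norm_nonneg _).trans (hG u hu v hv)) hr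
  calc ‖L (G u) - L (G v)‖ = ‖L (G u - G v)‖ := by rw [map_sub]
    _ ≤ ‖L‖ * ‖G u - G v‖ := L.le_opNorm _
    _ ≤ ‖L‖ * (K * ‖u - v‖) := by gcongr; exact hG u hu v hv
    _ ≤ ‖L‖ * (K * (CL * ‖L u - L v‖ * Real.log (CL / ‖L u - L v‖) ^ γ)) := by
      gcongr; exact inverse_modulus u hu v hv hr hrδ
    _ = CL * K * ‖L‖ * (‖L u - L v‖ * Real.log (CL / ‖L u - L v‖) ^ γ) := by ring

/-- **Modulus of continuity of the inverse of an almost bi-Lipschitz embedding, and of the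
embedded vector field.** If `L : H → ℝ^m` is injective on the compact set `𝒜` and
`γ`-almost bi-Lipschitz on `𝒜`, then (a) the inverse is Lipschitz up to a logarithmic
correction, and (b) for any `K`-Lipschitz `G : 𝒜 → H` the embedded vector field
`g₁ = L ∘ G ∘ (L|𝒜)⁻¹` is Lipschitz on `L𝒜` up to a logarithmic correction. -/
theorem almost_biLipschitz_inverse_modulus
    {H : Type*} [NormedAddCommGroup H] [InnerProductSpace ℝ H] [CompleteSpace H]
    (m : ℕ) (𝒜 : Set H) (h𝒜 : IsCompact 𝒜)
    (L : H →L[ℝ] EuclideanSpace ℝ (Fin m)) (hinj : Set.InjOn L 𝒜)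
    (CL γ δL : ℝ) (hCL : 1 ≤ CL) (hγ : 0 < γ) (hδ0 : 0 < δL) (hδ1 : δL < 1)
    (hupper : ∀ u ∈ 𝒜, ∀ v ∈ 𝒜, ‖L u - L v‖ ≤ CL * ‖u - v‖)
    (hlower : ∀ u ∈ 𝒜, ∀ v ∈ 𝒜, 0 < ‖u - v‖ → ‖u - v‖ ≤ δL →
      (1 / CL) * (‖u - v‖ / (-Real.log ‖u - v‖) ^ γ) ≤ ‖L u - L v‖) :
    -- (a) the inverse of `L|𝒜` is Lipschitz up to a logarithmic correction
    (∀ u ∈ 𝒜, ∀ v ∈ 𝒜, 0 < ‖u - v‖ → ‖u - v‖ ≤ δL →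
      ‖u - v‖ ≤ CL * ‖L u - L v‖ * (Real.log (CL / ‖L u - L v‖)) ^ γ) ∧
    -- (b) the embedded vector field is Lipschitz up to a logarithmic correction
    (∀ (G : H → H) (K : ℝ), (∀ u ∈ 𝒜, ∀ v ∈ 𝒜, ‖G u - G v‖ ≤ K * ‖u - v‖) →
      ∀ u ∈ 𝒜, ∀ v ∈ 𝒜, 0 < ‖u - v‖ → ‖u - v‖ ≤ δL →
        ‖L (G u) - L (G v)‖ ≤
          CL * K * ‖L‖ * (‖L u - L v‖ * (Real.log (CL / ‖L u - L v‖)) ^ γ)) :=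
  almost_biLipschitz_inverse_modulus_general m 𝒜 L CL γ δL hCL hγ hδ1 hupper hlower
end

section
/- Let g : ℝ^m → ℝ^m be continuous and suppose there are constants C₀ > 0, C > 1, 0 < γ ≤ 1 and R ∈ (0, C) such that |g(x) − g(y)| ≤ C₀·|x − y|·(log(C/|x − y|))^γ for all x, y ∈ ℝ^m with 0 < |x − y| ≤ R. Then solutions of ẋ = g(x) are unique: if x, y : [0, T] → ℝ^m are differentiable with ẋ(t) = g(x(t)) and ẏ(t) = g(y(t)) for all t ∈ [0, T], and x(0) = y(0), then x(t) = y(t) for all t ∈ [0, T]. -/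
/- Writing `z = x - y`, the modulus gives `‖ż‖ ≤ C₀ ‖z‖ log (C / ‖z‖)` while `z` is small,
since `log (C / r) ≥ 1` there and `γ ≤ 1`. The functions `B_L(t) = C exp (-L e^{-Kt})` solve
`B' = K B log (C / B)`; for `K > C₀` they are strict supersolutions, so `‖z‖ ≤ B_L` on `[0, T]`
as soon as `B_L` stays in the region where the modulus applies. Letting `L → ∞` squeezes `B_L(t)`
to `0`. -/

open Set Real Filter Topology

noncomputable section

def osgoodBarrier (C K L t : ℝ) : ℝ := C * exp (-(L * exp (-K * t)))

section osgoodBarrier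

variable {C K L t : ℝ}

lemma osgoodBarrier_pos (hC : 0 < C) : 0 < osgoodBarrier C K L t := by
  unfold osgoodBarrier; positivity

lemma log_div_osgoodBarrier (hC : 0 < C) : log (C / osgoodBarrier C K L t) = L * exp (-K * t) := by
  rw [osgoodBarrier, div_mul_cancel_left₀ hC.ne', log_inv, log_exp, neg_neg]

lemma hasDerivAt_osgoodBarrier :
    HasDerivAt (osgoodBarrier C K L) (K * osgoodBarrier C K L t * (L * exp (-K * t))) t := by
  have h := ((((hasDerivAt_id t).const_mul (-K)).exp.const_mul L).neg.exp).const_mul C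
  refine h.congr_deriv ?_
  simp only [osgoodBarrier, Pi.neg_apply, id]
  ring

lemma osgoodBarrier_le {r T : ℝ} (hC : 0 < C) (hK : 0 ≤ K) (hr : 0 < r) (hL0 : 0 ≤ L)
    (hL : log (C / r) ≤ L * exp (-K * T)) (ht : t ≤ T) : osgoodBarrier C K L t ≤ r := by
  have hlog : log (C / r) ≤ log (C / osgoodBarrier C K L t) := by
    rw [log_div_osgoodBarrier hC]
    exact hL.trans (mul_le_mul_of_nonneg_left (exp_le_exp.2 (by nlinarith)) hL0)
  rwa [log_le_log_iff (div_pos hC hr) (div_pos hC (osgoodBarrier_pos hC)),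
    div_le_div_iff_of_pos_left hC hr (osgoodBarrier_pos hC)] at hlog

lemma tendsto_osgoodBarrier_atTop (C K t : ℝ) :
    Tendsto (fun L => osgoodBarrier C K L t) atTop (𝓝 0) := by
  have h := tendsto_exp_atBot.comp
    (tendsto_neg_atTop_atBot.comp (tendsto_id.atTop_mul_const (exp_pos (-K * t))))
  simpa [osgoodBarrier] using h.const_mul C

end osgoodBarrier

section Osgood

variable {E : Type*} [NormedAddCommGroup E] [NormedSpace ℝ E] {z z' : ℝ → E} {K C r T : ℝ}

theorem norm_le_osgoodBarrier {L : ℝ} (hC : 0 < C) (hK : 0 ≤ K) (hr : 0 < r) (hL0 : 0 < L)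
    (hL : log (C / r) ≤ L * exp (-(K + 1) * T))
    (hz : ContinuousOn z (Icc 0 T))
    (hz' : ∀ t ∈ Ico 0 T, HasDerivWithinAt z (z' t) (Ici t) t) (hz0 : z 0 = 0)
    (hbound : ∀ t ∈ Ico 0 T, 0 < ‖z t‖ → ‖z t‖ ≤ r →
      ‖z' t‖ ≤ K * ‖z t‖ * log (C / ‖z t‖)) :
    ∀ t ∈ Icc 0 T, ‖z t‖ ≤ osgoodBarrier C (K + 1) L t := by
  refine image_norm_le_of_norm_deriv_right_lt_deriv_boundary hz hz'
    (by simpa [hz0] using (osgoodBarrier_pos hC).le) (fun _ => hasDerivAt_osgoodBarrier) ?_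
  intro t ht htouch
  have hB := osgoodBarrier_pos (K := K + 1) (L := L) (t := t) hC
  have hBr : osgoodBarrier C (K + 1) L t ≤ r :=
    osgoodBarrier_le hC (by linarith) hr hL0.le hL ht.2.le
  calc ‖z' t‖ ≤ K * ‖z t‖ * log (C / ‖z t‖) :=
        hbound t ht (htouch ▸ hB) (htouch ▸ hBr)
    _ = K * osgoodBarrier C (K + 1) L t * (L * exp (-(K + 1) * t)) := by
      rw [htouch, log_div_osgoodBarrier hC]
    _ < (K + 1) * osgoodBarrier C (K + 1) L t * (L * exp (-(K + 1) * t)) := by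
      gcongr
      exact lt_add_one K

theorem eq_zero_of_norm_deriv_le_mul_log (hC : 0 < C) (hK : 0 ≤ K) (hr : 0 < r)
    (hz : ContinuousOn z (Icc 0 T))
    (hz' : ∀ t ∈ Ico 0 T, HasDerivWithinAt z (z' t) (Ici t) t) (hz0 : z 0 = 0)
    (hbound : ∀ t ∈ Ico 0 T, 0 < ‖z t‖ → ‖z t‖ ≤ r →
      ‖z' t‖ ≤ K * ‖z t‖ * log (C / ‖z t‖)) :
    ∀ t ∈ Icc 0 T, z t = 0 := by
  intro t ht
  have hlarge : ∀ᶠ L in atTop, 0 < L ∧ log (C / r) ≤ L * exp (-(K + 1) * T) :=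
    (eventually_gt_atTop 0).and
      ((tendsto_id.atTop_mul_const (exp_pos _)).eventually_ge_atTop _)
  have hle : ∀ᶠ L in atTop, ‖z t‖ ≤ osgoodBarrier C (K + 1) L t :=
    hlarge.mono fun L ⟨hL0, hL⟩ => norm_le_osgoodBarrier hC hK hr hL0 hL hz hz' hz0 hbound t ht
  exact norm_le_zero_iff.1 (ge_of_tendsto (tendsto_osgoodBarrier_atTop C (K + 1) t) hle)

end Osgood

lemma rpow_log_div_le_log_div {C r γ : ℝ} (hr : 0 < r) (hrC : r ≤ C / exp 1) (hγ : γ ≤ 1) :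
    log (C / r) ^ γ ≤ log (C / r) := by
  have h : exp 1 ≤ C / r := by rwa [le_div_iff₀ hr, mul_comm, ← le_div_iff₀ (exp_pos 1)]
  exact rpow_le_self_of_one_le ((le_log_iff_exp_le ((exp_pos 1).trans_le h)).2 h) hγ

theorem osgood_uniqueness_log_lipschitz_general
    (m : ℕ) (g : EuclideanSpace ℝ (Fin m) → EuclideanSpace ℝ (Fin m))
    (C₀ C γ R : ℝ) (hC₀ : 0 < C₀) (hC : 1 < C) (hγ1 : γ ≤ 1)
    (hR0 : 0 < R)
    (hmod : ∀ x y : EuclideanSpace ℝ (Fin m), 0 < ‖x - y‖ → ‖x - y‖ ≤ R →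
      ‖g x - g y‖ ≤ C₀ * ‖x - y‖ * (Real.log (C / ‖x - y‖)) ^ γ)
    (T : ℝ)
    (x y : ℝ → EuclideanSpace ℝ (Fin m))
    (hx : ∀ t ∈ Set.Icc 0 T, HasDerivWithinAt x (g (x t)) (Set.Icc 0 T) t)
    (hy : ∀ t ∈ Set.Icc 0 T, HasDerivWithinAt y (g (y t)) (Set.Icc 0 T) t)
    (h0 : x 0 = y 0) :
    ∀ t ∈ Set.Icc 0 T, x t = y t := by
  have hCpos : 0 < C := zero_lt_one.trans hC
  set r := min R (C / exp 1)
  have hr : 0 < r := lt_min hR0 (div_pos hCpos (exp_pos 1))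
  have hcont : ContinuousOn (x - y) (Icc 0 T) := fun t ht =>
    (hx t ht).continuousWithinAt.sub (hy t ht).continuousWithinAt
  have hderiv : ∀ t ∈ Ico 0 T, HasDerivWithinAt (x - y) (g (x t) - g (y t)) (Ici t) t :=
    fun t ht => ((hx t (Ico_subset_Icc_self ht)).sub
      (hy t (Ico_subset_Icc_self ht))).mono_of_mem_nhdsWithin (Icc_mem_nhdsGE_of_mem ht)
  have hbound : ∀ t ∈ Ico 0 T, 0 < ‖(x - y) t‖ → ‖(x - y) t‖ ≤ r →
      ‖g (x t) - g (y t)‖ ≤ C₀ * ‖(x - y) t‖ * log (C / ‖(x - y) t‖) :=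
    fun t _ hpos hsmall =>
      (hmod _ _ hpos (hsmall.trans (min_le_left _ _))).trans <| mul_le_mul_of_nonneg_left
        (rpow_log_div_le_log_div hpos (hsmall.trans (min_le_right _ _)) hγ1) (by positivity)
  intro t ht
  exact sub_eq_zero.1 <| eq_zero_of_norm_deriv_le_mul_log hCpos hC₀.le hr hcont hderiv
    (sub_eq_zero.2 h0) hbound t ht

/-- **Osgood uniqueness for log-Lipschitz vector fields.** If
`|g(x) - g(y)| ≤ C₀ |x-y| (log(C/|x-y|))^γ` for `0 < |x-y| ≤ R` with `0 < γ ≤ 1`, `C > 1`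
and `R ∈ (0, C)`, then solutions of `ẋ = g(x)` on `[0,T]` are unique. -/
theorem osgood_uniqueness_log_lipschitz
    (m : ℕ) (g : EuclideanSpace ℝ (Fin m) → EuclideanSpace ℝ (Fin m))
    (hg : Continuous g)
    (C₀ C γ R : ℝ) (hC₀ : 0 < C₀) (hC : 1 < C) (hγ0 : 0 < γ) (hγ1 : γ ≤ 1)
    (hR0 : 0 < R) (hRC : R < C)
    (hmod : ∀ x y : EuclideanSpace ℝ (Fin m), 0 < ‖x - y‖ → ‖x - y‖ ≤ R →
      ‖g x - g y‖ ≤ C₀ * ‖x - y‖ * (Real.log (C / ‖x - y‖)) ^ γ)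
    (T : ℝ) (hT : 0 ≤ T)
    (x y : ℝ → EuclideanSpace ℝ (Fin m))
    (hx : ∀ t ∈ Set.Icc 0 T, HasDerivWithinAt x (g (x t)) (Set.Icc 0 T) t)
    (hy : ∀ t ∈ Set.Icc 0 T, HasDerivWithinAt y (g (y t)) (Set.Icc 0 T) t)
    (h0 : x 0 = y 0) :
    ∀ t ∈ Set.Icc 0 T, x t = y t :=
  osgood_uniqueness_log_lipschitz_general m g C₀ C γ R hC₀ hC hγ1 hR0 hmod T x y hx hy h0
end
end

section
/- Let φ : ℝ^m → [0, +∞) be C¹ and proper, let δ > 0, set P := {x ∈ ℝ^m : φ(x) ≤ δ}, and suppose ∇φ(x) ≠ 0 whenever φ(x) ≥ δ. Let v : ℝ^m → ℝ^m be continuous with v(x) = −∇φ(x) for every x with φ(x) ≥ δ. Then for every bounded set B ⊆ ℝ^m there exists T > 0 such that every differentiable curve x : [0, +∞) → ℝ^m with ẋ(t) = v(x(t)) for all t ≥ 0 and x(0) ∈ B satisfies x(t₀) ∈ P for some t₀ ∈ [0, T]. In fact one may take any T with C − cT < δ, where C := sup_{x ∈ B} φ(x) and c := inf{‖∇φ(x)‖²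 : δ ≤ φ(x) ≤ C} > 0. -/
open Metric Set Bornology

/-!
As long as a solution stays in `{φ > δ}` the field is `-∇φ`, so `φ` decreases along it at
rate `‖∇φ‖²`. Hence `φ(x(t)) ≤ φ(x(0)) ≤ C := sup_B φ`, the solution stays in the compact set
`{δ ≤ φ ≤ C}` on which the continuous, nonvanishing `‖∇φ‖²` is at least some `c > 0`, and
`φ(x(T)) ≤ C - cT < δ`: the solution cannot stay in `{φ > δ}` up to time `T`.
-/

section GradientFlow

variable {E : Type*} [NormedAddCommGroup E] [InnerProductSpace ℝ E] [CompleteSpace E]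

theorem ContDiff.continuous_gradient {φ : E → ℝ} (hφ : ContDiff ℝ 1 φ) :
    Continuous (gradient φ) :=
  (InnerProductSpace.toDual ℝ E).symm.continuous.comp (hφ.continuous_fderiv one_ne_zero)

theorem HasDerivAt.comp_neg_gradient {φ : E → ℝ} {x : ℝ → E} {t : ℝ}
    (hφ : DifferentiableAt ℝ φ (x t)) (hx : HasDerivAt x (-gradient φ (x t)) t) :
    HasDerivAt (fun s => φ (x s)) (-‖gradient φ (x t)‖ ^ 2) t := by
  have h := hφ.hasFDerivAt.comp_hasDerivAt t hx
  rwa [← inner_gradient_left, inner_neg_right, real_inner_self_eq_norm_sq] at h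

theorem apply_le_sub_mul_of_hasDerivAt_neg_gradient {φ : E → ℝ} (hφ : Differentiable ℝ φ)
    {x : ℝ → E} {a b c : ℝ} (hab : a ≤ b) (hxc : ContinuousOn x (Icc a b))
    (hx : ∀ t ∈ Ioo a b, HasDerivAt x (-gradient φ (x t)) t)
    (hc : ∀ t ∈ Ioo a b, c ≤ ‖gradient φ (x t)‖ ^ 2) :
    φ (x b) ≤ φ (x a) - c * (b - a) := by
  have hderiv : ∀ t ∈ interior (Icc a b),
      HasDerivAt (fun s => φ (x s)) (-‖gradient φ (x t)‖ ^ 2) t := by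
    rw [interior_Icc]
    exact fun t ht => (hx t ht).comp_neg_gradient (hφ _)
  have h := (convex_Icc a b).image_sub_le_mul_sub_of_deriv_le (f := fun s => φ (x s))
    (hφ.continuous.comp_continuousOn hxc)
    (fun t ht => (hderiv t ht).differentiableAt.differentiableWithinAt)
    (C := -c) (fun t ht => by
      rw [(hderiv t ht).deriv, neg_le_neg_iff]
      exact hc t (by rwa [interior_Icc] at ht))
    a (left_mem_Icc.2 hab) b (right_mem_Icc.2 hab) hab
  linarith

theorem exists_mem_Icc_apply_le_of_flow {φ : E → ℝ} (hφ : Differentiable ℝ φ) {v : E → E}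
    {δ : ℝ} (hveq : ∀ y, δ ≤ φ y → v y = -gradient φ y) {x : ℝ → E}
    (hx : ∀ t, 0 ≤ t → HasDerivWithinAt x (v (x t)) (Ici 0) t) {C c T : ℝ} (hT : 0 ≤ T)
    (hC : φ (x 0) ≤ C) (hc : ∀ y, δ ≤ φ y → φ y ≤ C → c ≤ ‖gradient φ y‖ ^ 2)
    (hTc : C - c * T < δ) :
    ∃ t₀ ∈ Icc 0 T, φ (x t₀) ≤ δ := by
  by_contra! hstay
  have hxc : ContinuousOn x (Icc 0 T) := fun t ht =>
    (hx t ht.1).continuousWithinAt.mono Icc_subset_Ici_self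
  have hx' : ∀ t ∈ Ioo 0 T, HasDerivAt x (-gradient φ (x t)) t := fun t ht => by
    rw [← hveq _ (hstay t (Ioo_subset_Icc_self ht)).le]
    exact (hx t ht.1.le).hasDerivAt (Ici_mem_nhds ht.1)
  have hle_C : ∀ t ∈ Icc 0 T, φ (x t) ≤ C := fun t ht => by
    have h := apply_le_sub_mul_of_hasDerivAt_neg_gradient hφ ht.1
      (hxc.mono (Icc_subset_Icc_right ht.2)) (fun s hs => hx' s ⟨hs.1, hs.2.trans_le ht.2⟩)
      (c := 0) (fun _ _ => by positivity)
    linarith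
  have h := apply_le_sub_mul_of_hasDerivAt_neg_gradient hφ hT hxc hx' fun t ht =>
    hc _ (hstay t (Ioo_subset_Icc_self ht)).le (hle_C t (Ioo_subset_Icc_self ht))
  linarith [hstay T (right_mem_Icc.2 hT)]

end GradientFlow

theorem bounded_sets_enter_sublevel_set_general
    (m : ℕ)
    (φ : EuclideanSpace ℝ (Fin m) → ℝ)
    (hφ : ContDiff ℝ 1 φ)
    (hproper : ∀ s t : ℝ, s < t → IsCompact (φ ⁻¹' Set.Icc s t))
    (δ : ℝ)
    (hgrad : ∀ x, δ ≤ φ x → gradient φ x ≠ 0)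
    (v : EuclideanSpace ℝ (Fin m) → EuclideanSpace ℝ (Fin m))
    (hveq : ∀ x, δ ≤ φ x → v x = -gradient φ x)
    (B : Set (EuclideanSpace ℝ (Fin m))) (hB : IsBounded B) :
    -- there is a uniform entry time `T` for all solutions starting in `B`
    (∃ T : ℝ, 0 < T ∧ ∀ x : ℝ → EuclideanSpace ℝ (Fin m),
        (∀ t : ℝ, 0 ≤ t → HasDerivWithinAt x (v (x t)) (Set.Ici 0) t) → x 0 ∈ B →
        ∃ t₀ ∈ Set.Icc (0 : ℝ) T, φ (x t₀) ≤ δ) ∧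
    -- the infimum `c` is positive (when the set `{δ ≤ φ ≤ C}` is nonempty)
    ({x | δ ≤ φ x ∧ φ x ≤ sSup (φ '' B)}.Nonempty →
      0 < sInf ((fun x => ‖gradient φ x‖ ^ 2) '' {x | δ ≤ φ x ∧ φ x ≤ sSup (φ '' B)})) ∧
    -- in fact any `T > 0` with `C - cT < δ` works
    (∀ T : ℝ, 0 < T →
      sSup (φ '' B) -
          sInf ((fun x => ‖gradient φ x‖ ^ 2) '' {x | δ ≤ φ x ∧ φ x ≤ sSup (φ '' B)}) * T
        < δ →
      ∀ x : ℝ → EuclideanSpace ℝ (Fin m),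
        (∀ t : ℝ, 0 ≤ t → HasDerivWithinAt x (v (x t)) (Set.Ici 0) t) → x 0 ∈ B →
        ∃ t₀ ∈ Set.Icc (0 : ℝ) T, φ (x t₀) ≤ δ) := by
  set C := sSup (φ '' B)
  set K := {y | δ ≤ φ y ∧ φ y ≤ C}
  have hg : Continuous fun y => ‖gradient φ y‖ ^ 2 := hφ.continuous_gradient.norm.pow 2
  have hg_pos : ∀ y ∈ K, 0 < ‖gradient φ y‖ ^ 2 := fun y hy =>
    pow_pos (norm_pos_iff.2 (hgrad y hy.1)) 2
  have hK : IsCompact K :=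
    (hproper (min δ C - 1) C (by linarith [min_le_right δ C])).of_isClosed_subset
      (isClosed_Icc.preimage hφ.continuous) fun y hy => ⟨by linarith [hy.1, min_le_left δ C], hy.2⟩
  have hC : ∀ y ∈ B, φ y ≤ C := fun y hy => le_csSup
    ((hB.isCompact_closure.image hφ.continuous).bddAbove.mono (image_mono subset_closure))
    (mem_image_of_mem φ hy)
  have hentry : ∀ c, (∀ y ∈ K, c ≤ ‖gradient φ y‖ ^ 2) → ∀ T, 0 ≤ T → C - c * T < δ →
      ∀ x : ℝ → EuclideanSpace ℝ (Fin m),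
        (∀ t : ℝ, 0 ≤ t → HasDerivWithinAt x (v (x t)) (Ici 0) t) → x 0 ∈ B →
        ∃ t₀ ∈ Icc (0 : ℝ) T, φ (x t₀) ≤ δ := fun c hc T hT hTc x hx hx0 =>
    exists_mem_Icc_apply_le_of_flow (hφ.differentiable one_ne_zero) hveq hx hT (hC _ hx0)
      (fun y hδy hyC => hc y ⟨hδy, hyC⟩) hTc
  refine ⟨?_, fun hne => ?_, fun T hT => hentry _ (fun y hy => csInf_le
    ⟨0, by rintro _ ⟨_, _, rfl⟩; positivity⟩ (mem_image_of_mem _ hy)) T hT.le⟩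
  · obtain ⟨c, hc_pos, hc⟩ := hK.exists_forall_le' hg.continuousOn hg_pos
    refine ⟨|C - δ| / c + 1, by positivity, hentry c hc _ (by positivity) ?_⟩
    rw [mul_add, mul_div_cancel₀ _ hc_pos.ne', mul_one]
    linarith [le_abs_self (C - δ)]
  · obtain ⟨y, hy, hy_eq⟩ := (hK.image hg).sInf_mem (hne.image _)
    exact hy_eq ▸ hg_pos y hy

/-- **Bounded sets enter the sublevel set `P = {φ ≤ δ}` in finite time.** Suppose
`φ : ℝ^m → [0,∞)` is `C¹` and proper, `∇φ ≠ 0` on `{φ ≥ δ}`, and `v` is a continuous vector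
field with `v = -∇φ` on `{φ ≥ δ}`. Then for every bounded `B` there is `T > 0` such that
every forward solution of `ẋ = v(x)` starting in `B` meets `P` at some time `t₀ ∈ [0,T]`.
In fact, with `C := sup_B φ` and `c := inf {‖∇φ‖² : δ ≤ φ ≤ C}` (a positive number), any
`T > 0` with `C - cT < δ` works. -/
theorem bounded_sets_enter_sublevel_set
    (m : ℕ)
    (φ : EuclideanSpace ℝ (Fin m) → ℝ)
    (hφ : ContDiff ℝ 1 φ) (hφnn : ∀ x, 0 ≤ φ x)
    (hproper : ∀ s t : ℝ, s < t → IsCompact (φ ⁻¹' Set.Icc s t))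
    (δ : ℝ) (hδ : 0 < δ)
    (hgrad : ∀ x, δ ≤ φ x → gradient φ x ≠ 0)
    (v : EuclideanSpace ℝ (Fin m) → EuclideanSpace ℝ (Fin m)) (hv : Continuous v)
    (hveq : ∀ x, δ ≤ φ x → v x = -gradient φ x)
    (B : Set (EuclideanSpace ℝ (Fin m))) (hB : IsBounded B) :
    -- there is a uniform entry time `T` for all solutions starting in `B`
    (∃ T : ℝ, 0 < T ∧ ∀ x : ℝ → EuclideanSpace ℝ (Fin m),
        (∀ t : ℝ, 0 ≤ t → HasDerivWithinAt x (v (x t)) (Set.Ici 0) t) → x 0 ∈ B →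
        ∃ t₀ ∈ Set.Icc (0 : ℝ) T, φ (x t₀) ≤ δ) ∧
    -- the infimum `c` is positive (when the set `{δ ≤ φ ≤ C}` is nonempty)
    ({x | δ ≤ φ x ∧ φ x ≤ sSup (φ '' B)}.Nonempty →
      0 < sInf ((fun x => ‖gradient φ x‖ ^ 2) '' {x | δ ≤ φ x ∧ φ x ≤ sSup (φ '' B)})) ∧
    -- in fact any `T > 0` with `C - cT < δ` works
    (∀ T : ℝ, 0 < T →
      sSup (φ '' B) -
          sInf ((fun x => ‖gradient φ x‖ ^ 2) '' {x | δ ≤ φ x ∧ φ x ≤ sSup (φ '' B)}) * T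
        < δ →
      ∀ x : ℝ → EuclideanSpace ℝ (Fin m),
        (∀ t : ℝ, 0 ≤ t → HasDerivWithinAt x (v (x t)) (Set.Ici 0) t) → x 0 ∈ B →
        ∃ t₀ ∈ Set.Icc (0 : ℝ) T, φ (x t₀) ≤ δ) :=
  bounded_sets_enter_sublevel_set_general m φ hφ hproper δ hgrad v hveq B hB
end

section
/- Let X ⊆ ℝ^n be a nonempty compact set and let ψ : ℝ^n → [0, +∞) be a continuous proper function with ψ^{-1}(0) = X, such that ψ is C¹ on ℝ^n \ X with ∇ψ(x) ≠ 0 for all x ∉ X and with nonempty level sets F_t := ψ^{-1}(t) for every t > 0. Define M(t) := max_{x ∈ F_t} max_{1 ≤ i ≤ n} |∂ψ/∂x_i(x)| for t > 0. Let b : [0, +∞) → [0, +∞) be a C¹ function with b(0) = 0, b'(0) = 0, b'(t) > 0 for t > 0, and b'(t) ≤ t/M(t) for all t > 0. Then b∘ψ is C¹ on all of ℝ^n, its partial derivatives satisfy |∂(b∘ψ)/∂x_i(x)| ≤ ψ(x) for all x ∉ X and 1 ≤ i ≤ n, and ∇(b∘ψ)(x) = 0 if and only if x ∈ X. -/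
/-!
Off `X` the chain rule gives `∂ᵢ(b ∘ ψ) = b'(ψ) ∂ᵢψ`, and `b'(t) ≤ t / M(t)` bounds this by `ψ`.
So the derivative of `b ∘ ψ` tends to `0` at every point of `X`, where `b ∘ ψ` itself vanishes.
The mean value inequality on a segment from `y` up to its first point in `X` then gives
`|b (ψ y)| = o(‖y - x‖)` at `x ∈ X`: `b ∘ ψ` has derivative `0` on `X` and is `C¹`. Off `X` its
gradient `b'(ψ) ∇ψ` is nonzero.
-/

open Metric Set Filter Topology

noncomputable section

section ClosedZeroSet

variable {E F : Type*} [NormedAddCommGroup E] [NormedSpace ℝ E]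
  [NormedAddCommGroup F] [NormedSpace ℝ F]

theorem norm_le_mul_norm_sub_of_hasFDerivAt_compl {f : E → F} {f' : E → E →L[ℝ] F}
    {s U : Set E} {x y : E} {C : ℝ} (hs : IsClosed s) (hU : Convex ℝ U) (hx : x ∈ s)
    (hxU : x ∈ U) (hyU : y ∈ U) (hf : ContinuousOn f U) (hfs : ∀ z ∈ s, f z = 0)
    (hf' : ∀ z ∈ U \ s, HasFDerivAt f (f' z) z) (hC0 : 0 ≤ C)
    (hC : ∀ z ∈ U \ s, ‖f' z‖ ≤ C) :
    ‖f y‖ ≤ C * ‖y - x‖ := by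
  set γ : ℝ → E := fun t => y + t • (x - y) with hγ
  have hγc : Continuous γ := by fun_prop
  have hγU : MapsTo γ (Icc 0 1) U := fun t ht => hU.add_smul_sub_mem hyU hxU ht
  have hγ' : ∀ t, HasDerivAt γ (x - y) t := fun t => by
    simpa only [one_smul] using ((hasDerivAt_id' t).smul_const (x - y)).const_add y
  obtain ⟨t₁, ⟨ht₁, ht₁s⟩, hleast⟩ : ∃ t₁, IsLeast (Icc 0 1 ∩ γ ⁻¹' s) t₁ :=
    (isCompact_Icc.inter_right (hs.preimage hγc)).exists_isLeast
      ⟨1, right_mem_Icc.2 zero_le_one, by simpa [hγ] using hx⟩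
  have hoff : ∀ t ∈ Ico 0 t₁, γ t ∈ U \ s := fun t ht =>
    ⟨hγU ⟨ht.1, ht.2.le.trans ht₁.2⟩,
      fun hts => (hleast ⟨⟨ht.1, ht.2.le.trans ht₁.2⟩, hts⟩).not_gt ht.2⟩
  have hmvt := norm_image_sub_le_of_norm_deriv_right_le_segment (f := f ∘ γ)
    (hf.comp hγc.continuousOn (hγU.mono_left (Icc_subset_Icc_right ht₁.2)))
    (fun t ht => ((hf' _ (hoff t ht)).comp_hasDerivAt t (hγ' t)).hasDerivWithinAt)
    (fun t ht => (f' (γ t)).le_of_opNorm_le (hC _ (hoff t ht)) (x - y))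
    t₁ (right_mem_Icc.2 ht₁.1)
  have hγ0 : γ 0 = y := by simp [hγ]
  rw [Function.comp_apply, Function.comp_apply, hfs _ ht₁s, hγ0, zero_sub, norm_neg,
    sub_zero] at hmvt
  calc ‖f y‖ ≤ C * ‖x - y‖ * t₁ := hmvt
    _ ≤ C * ‖x - y‖ * 1 := by gcongr; exact ht₁.2
    _ = C * ‖y - x‖ := by rw [mul_one, norm_sub_rev]

theorem hasFDerivAt_zero_of_tendsto_compl {f : E → F} {f' : E → E →L[ℝ] F} {s : Set E}
    {x : E} (hs : IsClosed s) (hx : x ∈ s) (hf : Continuous f) (hfs : ∀ z ∈ s, f z = 0)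
    (hf' : ∀ z ∉ s, HasFDerivAt f (f' z) z) (hlim : Tendsto f' (𝓝[sᶜ] x) (𝓝 0)) :
    HasFDerivAt f (0 : E →L[ℝ] F) x := by
  refine HasFDerivAt.of_isLittleO (Asymptotics.isLittleO_iff.2 fun ε hε => ?_)
  obtain ⟨r, hr, hsmall⟩ : ∃ r > 0, ∀ z ∈ ball x r, z ∈ sᶜ → ‖f' z‖ < ε := by
    have := Metric.tendsto_nhds.1 hlim ε hε
    simpa only [dist_zero_right, eventually_nhdsWithin_iff,
      Metric.eventually_nhds_iff_ball] using this
  filter_upwards [ball_mem_nhds x hr] with y hy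
  simpa only [hfs x hx, sub_zero, zero_apply] using
    norm_le_mul_norm_sub_of_hasFDerivAt_compl hs (convex_ball x r) hx (mem_ball_self hr) hy
      hf.continuousOn hfs (fun z hz => hf' z hz.2) hε.le (fun z hz => (hsmall z hz.1 hz.2).le)

theorem contDiff_one_of_tendsto_fderiv_compl {f : E → F} {s : Set E} (hs : IsClosed s)
    (hf : Continuous f) (hfs : ∀ z ∈ s, f z = 0) (hfc : ContDiffOn ℝ 1 f sᶜ)
    (hlim : ∀ x ∈ s, Tendsto (fderiv ℝ f) (𝓝[sᶜ] x) (𝓝 0)) :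
    ContDiff ℝ 1 f := by
  have hoff : ∀ z ∉ s, ContDiffAt ℝ 1 f z := fun z hz =>
    hfc.contDiffAt (hs.isOpen_compl.mem_nhds hz)
  have hon : ∀ x ∈ s, HasFDerivAt f (0 : E →L[ℝ] F) x := fun x hx =>
    hasFDerivAt_zero_of_tendsto_compl hs hx hf hfs
      (fun z hz => ((hoff z hz).differentiableAt one_ne_zero).hasFDerivAt) (hlim x hx)
  refine contDiff_one_iff_fderiv.2 ⟨fun x => ?_, continuous_iff_continuousAt.2 fun x => ?_⟩
  · by_cases hx : x ∈ s
    · exact (hon x hx).differentiableAt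
    · exact (hoff x hx).differentiableAt one_ne_zero
  · by_cases hx : x ∈ s
    · rw [ContinuousAt, (hon x hx).fderiv, ← nhdsWithin_univ, ← union_compl_self s,
        nhdsWithin_union]
      exact (tendsto_const_nhds.congr' (eventually_nhdsWithin_of_forall fun z hz =>
        (hon z hz).fderiv.symm)).sup (hlim x hx)
    · exact (hfc.continuousOn_fderiv_of_isOpen hs.isOpen_compl le_rfl).continuousAt
        (hs.isOpen_compl.mem_nhds hx)

theorem hasFDerivAt_comp_of_contDiffOn_Ici {b : ℝ → ℝ} {ψ : E → ℝ} {U : Set E} {z : E}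
    (hb : ContDiffOn ℝ 1 b (Ici 0)) (hψ : ContDiffOn ℝ 1 ψ U) (hU : U ∈ 𝓝 z)
    (hz : 0 < ψ z) :
    HasFDerivAt (b ∘ ψ) (derivWithin b (Ici 0) (ψ z) • fderiv ℝ ψ z) z := by
  have hIci : Ici (0 : ℝ) ∈ 𝓝 (ψ z) := Ici_mem_nhds hz
  rw [derivWithin_of_mem_nhds hIci]
  exact ((hb.contDiffAt hIci).differentiableAt one_ne_zero).hasDerivAt.comp_hasFDerivAt z
    ((hψ.contDiffAt hU).differentiableAt one_ne_zero).hasFDerivAt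

end ClosedZeroSet

theorem gradient_eq_zero_iff_fderiv_eq_zero {E : Type*} [NormedAddCommGroup E]
    [InnerProductSpace ℝ E] [CompleteSpace E] {f : E → ℝ} {x : E} :
    gradient f x = 0 ↔ fderiv ℝ f x = 0 :=
  (InnerProductSpace.toDual ℝ E).symm.map_eq_zero_iff

theorem abs_smul_fderiv_single_le {n : ℕ} {ψ : EuclideanSpace ℝ (Fin n) → ℝ}
    {X : Set (EuclideanSpace ℝ (Fin n))} {m t c : ℝ}
    (hm : IsGreatest {v : ℝ | ∃ x, x ∉ X ∧ ψ x = t ∧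
        v = ⨆ i : Fin n, |fderiv ℝ ψ x (EuclideanSpace.single i 1)|} m)
    (ht : 0 ≤ t) (hc : 0 < c) (hcm : c ≤ t / m) {z : EuclideanSpace ℝ (Fin n)} (hz : z ∉ X)
    (hzt : ψ z = t) (i : Fin n) :
    |(c • fderiv ℝ ψ z) (EuclideanSpace.single i 1)| ≤ t := by
  have hpartial : |fderiv ℝ ψ z (EuclideanSpace.single i 1)| ≤ m :=
    (le_ciSup (finite_range _).bddAbove i).trans (hm.2 ⟨z, hz, hzt, rfl⟩)
  have hm0 : 0 < m := by
    by_contra! h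
    linarith [div_nonpos_of_nonneg_of_nonpos ht h]
  rw [smul_apply, smul_eq_mul, abs_mul, abs_of_pos hc]
  calc c * |fderiv ℝ ψ z (EuclideanSpace.single i 1)| ≤ t / m * m :=
        mul_le_mul hcm hpartial (abs_nonneg _) (hc.le.trans hcm)
    _ = t := div_mul_cancel₀ t hm0.ne'

theorem smoothing_composition_C1_general
    (n : ℕ) (X : Set (EuclideanSpace ℝ (Fin n)))
    (ψ : EuclideanSpace ℝ (Fin n) → ℝ)
    (hψcont : Continuous ψ) (hψnn : ∀ x, 0 ≤ ψ x)
    (hzero : ψ ⁻¹' {0} = X)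
    (hψsm : ContDiffOn ℝ 1 ψ Xᶜ)
    (hψgrad : ∀ x ∉ X, gradient ψ x ≠ 0)
    (M : ℝ → ℝ)
    (hM : ∀ t : ℝ, 0 < t →
      IsGreatest {v : ℝ | ∃ x, x ∉ X ∧ ψ x = t ∧
        v = ⨆ i : Fin n, |fderiv ℝ ψ x (EuclideanSpace.single i 1)|} (M t))
    (b : ℝ → ℝ)
    (hb : ContDiffOn ℝ 1 b (Set.Ici 0))
    (hb0 : b 0 = 0)
    (hb'pos : ∀ t : ℝ, 0 < t → 0 < derivWithin b (Set.Ici 0) t)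
    (hb'le : ∀ t : ℝ, 0 < t → derivWithin b (Set.Ici 0) t ≤ t / M t) :
    ContDiff ℝ 1 (b ∘ ψ) ∧
    (∀ x ∉ X, ∀ i : Fin n, |fderiv ℝ (b ∘ ψ) x (EuclideanSpace.single i 1)| ≤ ψ x) ∧
    (∀ x, gradient (b ∘ ψ) x = 0 ↔ x ∈ X) := by
  have hX : IsClosed X := hzero ▸ isClosed_singleton.preimage hψcont
  have hψX : ∀ x ∈ X, ψ x = 0 := fun x hx => (hzero ▸ hx : x ∈ ψ ⁻¹' {0})
  have hψpos : ∀ x ∉ X, 0 < ψ x := fun x hx =>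
    (hψnn x).lt_of_ne' fun h => hx (hzero ▸ h)
  have hfX : ∀ x ∈ X, (b ∘ ψ) x = 0 := fun x hx => by simp [hψX x hx, hb0]
  have hderiv : ∀ z ∉ X, HasFDerivAt (b ∘ ψ)
      (derivWithin b (Ici 0) (ψ z) • fderiv ℝ ψ z) z := fun z hz =>
    hasFDerivAt_comp_of_contDiffOn_Ici hb hψsm (hX.isOpen_compl.mem_nhds hz) (hψpos z hz)
  have hpartial : ∀ z ∉ X, ∀ i : Fin n,
      |fderiv ℝ (b ∘ ψ) z (EuclideanSpace.single i 1)| ≤ ψ z := fun z hz i => by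
    rw [(hderiv z hz).fderiv]
    exact abs_smul_fderiv_single_le (hM _ (hψpos z hz)) (hψnn z) (hb'pos _ (hψpos z hz))
      (hb'le _ (hψpos z hz)) hz rfl i
  obtain ⟨C, -, hC⟩ := (EuclideanSpace.basisFun (Fin n) ℝ).toBasis.exists_opNorm_le (F := ℝ)
  have hlim : ∀ x ∈ X, Tendsto (fderiv ℝ (b ∘ ψ)) (𝓝[Xᶜ] x) (𝓝 0) := fun x hx => by
    refine squeeze_zero_norm' (eventually_nhdsWithin_of_forall fun z hz =>
      hC (hψnn z) fun i => by simpa using hpartial z hz i) ?_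
    simpa [hψX x hx] using ((hψcont.tendsto x).const_mul C).mono_left nhdsWithin_le_nhds
  have hcont : Continuous (b ∘ ψ) := hb.continuousOn.comp_continuous hψcont hψnn
  refine ⟨contDiff_one_of_tendsto_fderiv_compl hX hcont hfX
    (hb.comp hψsm fun z _ => hψnn z) hlim, hpartial, fun x => ?_⟩
  rw [gradient_eq_zero_iff_fderiv_eq_zero]
  refine ⟨fun h => by_contra fun hx => ?_, fun hx => ?_⟩
  · rw [(hderiv x hx).fderiv] at h
    exact smul_ne_zero (hb'pos _ (hψpos x hx)).ne'
      (fun h' => hψgrad x hx (gradient_eq_zero_iff_fderiv_eq_zero.2 h')) h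
  · exact (hasFDerivAt_zero_of_tendsto_compl hX hx hcont hfX
      (fun z hz => (hderiv z hz).differentiableAt.hasFDerivAt) (hlim x hx)).fderiv

/-- **Smoothing a proper function by composing with a flat diffeomorphism.** Let `X ⊆ ℝ^n`
be nonempty and compact, `ψ : ℝ^n → [0,∞)` continuous and proper with `ψ⁻¹(0) = X`, `C¹` on
`ℝ^n \ X` with nonvanishing gradient there and nonempty level sets `F_t` for `t > 0`, and
let `M t` be the maximum over `F_t` of the maximal absolute partial derivative of `ψ`. If
`b : [0,∞) → [0,∞)` is `C¹` with `b 0 = 0`, `b' 0 = 0`, `b' t > 0` and `b' t ≤ t / M t` for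
`t > 0`, then `b ∘ ψ` is `C¹` on all of `ℝ^n`, its partial derivatives off `X` are bounded by
`ψ`, and its gradient vanishes exactly on `X`. -/
theorem smoothing_composition_C1
    (n : ℕ) (X : Set (EuclideanSpace ℝ (Fin n))) (hXne : X.Nonempty) (hXcomp : IsCompact X)
    (ψ : EuclideanSpace ℝ (Fin n) → ℝ)
    (hψcont : Continuous ψ) (hψnn : ∀ x, 0 ≤ ψ x)
    (hproper : ∀ s t : ℝ, s < t → IsCompact (ψ ⁻¹' Set.Icc s t))
    (hzero : ψ ⁻¹' {0} = X)
    (hψsm : ContDiffOn ℝ 1 ψ Xᶜ)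
    (hψgrad : ∀ x ∉ X, gradient ψ x ≠ 0)
    (hlevel : ∀ t : ℝ, 0 < t → ∃ x, x ∉ X ∧ ψ x = t)
    (M : ℝ → ℝ)
    (hM : ∀ t : ℝ, 0 < t →
      IsGreatest {v : ℝ | ∃ x, x ∉ X ∧ ψ x = t ∧
        v = ⨆ i : Fin n, |fderiv ℝ ψ x (EuclideanSpace.single i 1)|} (M t))
    (b : ℝ → ℝ)
    (hb : ContDiffOn ℝ 1 b (Set.Ici 0))
    (hbnn : ∀ t : ℝ, 0 ≤ t → 0 ≤ b t)
    (hb0 : b 0 = 0)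
    (hb'0 : derivWithin b (Set.Ici 0) 0 = 0)
    (hb'pos : ∀ t : ℝ, 0 < t → 0 < derivWithin b (Set.Ici 0) t)
    (hb'le : ∀ t : ℝ, 0 < t → derivWithin b (Set.Ici 0) t ≤ t / M t) :
    ContDiff ℝ 1 (b ∘ ψ) ∧
    (∀ x ∉ X, ∀ i : Fin n, |fderiv ℝ (b ∘ ψ) x (EuclideanSpace.single i 1)| ≤ ψ x) ∧
    (∀ x, gradient (b ∘ ψ) x = 0 ↔ x ∈ X) :=
  smoothing_composition_C1_general n X ψ hψcont hψnn hzero hψsm hψgrad M hM b hb hb0 hb'pos hb'le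
end
end
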